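/- U(R_min^max, C_min^max) is the convex hull of the set P(R_min^max, C_min^max) of its 0-1 matrices. -/

import Mathlib

/-- The transportation polytope `U(R_min^max, C_min^max)`: n×m real matrices with entries
in `[0,1]`, row sums in `[r i, R i]` and column sums in `[c j, C j]`. -/
def transportU (n m : ℕ) (r R : Fin n → ℕ) (c C : Fin m → ℕ) :
    Set (Matrix (Fin n) (Fin m) ℝ) :=
  {A | (∀ i j, 0 ≤ A i j ∧ A i j ≤ 1) ∧
       (∀ i, (r i : ℝ) ≤ ∑ j, A i j ∧ ∑ j, A i j ≤ (R i : ℝ)) ∧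
       (∀ j, (c j : ℝ) ≤ ∑ i, A i j ∧ ∑ i, A i j ≤ (C j : ℝ))}

/-!
By Krein–Milman the compact convex set `transportU n m r R c C` is the closed convex hull of its
extreme points, so it suffices that every extreme point `A` is a 0-1 matrix. Suppose not, and let
`F` be the set of non-integral entries of `A`. A row with integral sum that meets `F` meets it at
least twice, so there are at most `#F / 2` such rows and `#F / 2` such columns, and one of these
bounds has slack: either some entry of `F` lies in a line with non-integral sum, or all rows and
columns meeting `F` have integral sums and then the row constraints and the column constraints
share one linear relation. Counting dimensions gives a nonzero `D` supported on `F` whose line sums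
vanish wherever those of `A` are integral. Every constraint of the polytope that `D` moves is then
strict at `A`, so `A ± ε • D` stays in the polytope for small `ε`, contradicting extremality.
-/

open Finset Filter Topology

section
variable {K ι κ : Type*} [Field K] [Fintype ι] [Fintype κ]

theorem exists_ne_zero_forall_sum_eq_zero (S : κ → Finset ι)
    (h : Fintype.card κ < Fintype.card ι) :
    ∃ f : ι → K, f ≠ 0 ∧ ∀ k, ∑ x ∈ S k, f x = 0 := by
  let L : (ι → K) →ₗ[K] κ → K := LinearMap.pi fun k => ∑ x ∈ S k, LinearMap.proj x
  obtain ⟨f, hf, hf0⟩ := Submodule.exists_mem_ne_zero_of_ne_bot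
    (L.ker_ne_bot_of_finrank_lt (by simpa using h))
  exact ⟨f, hf0, fun k => by simpa [L] using congrFun (LinearMap.mem_ker.1 hf) k⟩

theorem exists_ne_zero_supported_forall_sum_eq_zero (F : Finset ι) (S : κ → Finset ι)
    (h : Fintype.card κ < #F) :
    ∃ f : ι → K, f ≠ 0 ∧ (∀ x ∉ F, f x = 0) ∧ ∀ k, ∑ x ∈ S k, f x = 0 := by
  classical
  obtain ⟨f, hf0, hf⟩ := exists_ne_zero_forall_sum_eq_zero (K := K)
    (Sum.elim S fun x : ↥Fᶜ => {x.1}) (by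
      simp only [Fintype.card_sum, Fintype.card_coe, card_compl]
      have := F.card_le_univ
      omega)
  exact ⟨f, hf0, fun x hx => by simpa using hf (.inr ⟨x, by simpa using hx⟩),
    fun k => hf (.inl k)⟩

end

theorem exists_ne_notMem_of_sum_mem {M ι : Type*} [AddCommGroup M] [Fintype ι] [DecidableEq ι]
    (G : AddSubgroup M) {f : ι → M} {x : ι} (hsum : ∑ y, f y ∈ G) (hx : f x ∉ G) :
    ∃ y ≠ x, f y ∉ G := by
  by_contra! h
  apply hx
  have := G.sub_mem hsum (G.sum_mem (t := univ.erase x) fun y hy => h y (ne_of_mem_erase hy))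
  rwa [← add_sum_erase _ _ (mem_univ x), add_sub_cancel_right] at this

theorem two_mul_card_le_card_filter {ι α : Type*} [DecidableEq α] (s : Finset ι) (f : ι → α)
    (V : Finset α) (h : ∀ a ∈ V, 1 < #{x ∈ s | f x = a}) :
    2 * #V ≤ #{x ∈ s | f x ∈ V} := by
  rw [← sum_card_fiberwise_eq_card_filter, mul_comm, ← smul_eq_mul]
  exact card_nsmul_le_sum _ _ _ h

theorem sum_row_eq_zero_of_sum_col_eq_zero {M α β : Type*} [AddCommMonoid M] [Fintype α]
    [Fintype β] (D : α → β → M) (i₀ : α)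
    (hr : ∀ i ≠ i₀, ∑ j, D i j = 0) (hc : ∀ j, ∑ i, D i j = 0) :
    ∑ j, D i₀ j = 0 := by
  rw [← Fintype.sum_eq_single i₀ hr, sum_comm]
  exact sum_eq_zero fun j _ => hc j

namespace Matrix

variable {K α β : Type*} [Field K] [Fintype α] [Fintype β]

theorem exists_ne_zero_supported_sums_eq_zero (F : Finset (α × β)) (W₁ : Finset α)
    (W₂ : Finset β) (h : #W₁ + #W₂ < #F) :
    ∃ D : Matrix α β K, D ≠ 0 ∧ (∀ i j, D i j ≠ 0 → (i, j) ∈ F) ∧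
      (∀ i ∈ W₁, ∑ j, D i j = 0) ∧ ∀ j ∈ W₂, ∑ i, D i j = 0 := by
  obtain ⟨f, hf0, hF, hS⟩ := exists_ne_zero_supported_forall_sum_eq_zero (K := K) F
    (Sum.elim (fun i : W₁ => {i.1} ×ˢ univ) fun j : W₂ => univ ×ˢ {j.1}) (by simpa using h)
  refine ⟨of fun i j => f (i, j), fun h0 => hf0 (funext fun p => congrFun₂ h0 p.1 p.2),
    fun i j h => not_not.1 (mt (hF _) h), fun i hi => ?_, fun j hj => ?_⟩
  · simpa [sum_product] using hS (.inl ⟨i, hi⟩)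
  · simpa [sum_product_right] using hS (.inr ⟨j, hj⟩)

theorem exists_ne_zero_supported_sums_eq_zero_of_one_lt_card [DecidableEq α] [DecidableEq β]
    (F : Finset (α × β)) (hF : F.Nonempty) (Vr : Finset α) (Vc : Finset β)
    (hVr : ∀ i ∈ Vr, 1 < #{p ∈ F | p.1 = i}) (hVc : ∀ j ∈ Vc, 1 < #{p ∈ F | p.2 = j}) :
    ∃ D : Matrix α β K, D ≠ 0 ∧ (∀ i j, D i j ≠ 0 → (i, j) ∈ F) ∧
      (∀ i ∈ Vr, ∑ j, D i j = 0) ∧ ∀ j ∈ Vc, ∑ i, D i j = 0 := by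
  have hr := two_mul_card_le_card_filter F Prod.fst Vr hVr
  have hc := two_mul_card_le_card_filter F Prod.snd Vc hVc
  have hr' := card_le_card (filter_subset (·.1 ∈ Vr) F)
  have hc' := card_le_card (filter_subset (·.2 ∈ Vc) F)
  by_cases hslack : ∃ p ∈ F, p.1 ∉ Vr ∨ p.2 ∉ Vc
  · obtain ⟨p, hpF, hp | hp⟩ := hslack
    · have : #{q ∈ F | q.1 ∈ Vr} < #F := card_lt_card (filter_ssubset.2 ⟨p, hpF, hp⟩)
      exact exists_ne_zero_supported_sums_eq_zero F Vr Vc (by omega)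
    · have : #{q ∈ F | q.2 ∈ Vc} < #F := card_lt_card (filter_ssubset.2 ⟨p, hpF, hp⟩)
      exact exists_ne_zero_supported_sums_eq_zero F Vr Vc (by omega)
  push Not at hslack
  -- Every line meeting `F` is now constrained, but the row constraints and the column
  -- constraints both add up to the total sum, so the constraint of one row may be dropped.
  obtain ⟨⟨i₀, j₀⟩, hp₀⟩ := hF
  have hi₀ : i₀ ∈ Vr := (hslack _ hp₀).1
  obtain ⟨D, hD0, hDF, hDr, hDc⟩ := exists_ne_zero_supported_sums_eq_zero (K := K) F
    (Vr.erase i₀) Vc (by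
      have := card_pos.2 ⟨i₀, hi₀⟩
      rw [card_erase_of_mem hi₀]
      omega)
  have hcol : ∀ j, ∑ i, D i j = 0 := fun j => by
    by_cases hj : j ∈ Vc
    · exact hDc j hj
    · exact sum_eq_zero fun i _ => by_contra fun h => hj (hslack _ (hDF i j h)).2
  have hrow : ∀ i ≠ i₀, ∑ j, D i j = 0 := fun i hi => by
    by_cases hi' : i ∈ Vr
    · exact hDr i (mem_erase.2 ⟨hi, hi'⟩)
    · exact sum_eq_zero fun j _ => by_contra fun h => hi' (hslack _ (hDF i j h)).1
  refine ⟨D, hD0, hDF, fun i _ => ?_, fun j _ => hcol j⟩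
  obtain rfl | hi := eq_or_ne i i₀
  exacts [sum_row_eq_zero_of_sum_col_eq_zero D i hrow hcol, hrow i hi]

theorem exists_ne_zero_moving_only_notMem (G : AddSubgroup K) (A : Matrix α β K)
    (hA : ∃ i j, A i j ∉ G) :
    ∃ D : Matrix α β K, D ≠ 0 ∧ (∀ i j, D i j ≠ 0 → A i j ∉ G) ∧
      (∀ i, ∑ j, D i j ≠ 0 → ∑ j, A i j ∉ G) ∧
      ∀ j, ∑ i, D i j ≠ 0 → ∑ i, A i j ∉ G := by
  classical
  set F : Finset (α × β) := {p | A p.1 p.2 ∉ G}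
  have hVr : ∀ i ∈ ({i | ∑ j, A i j ∈ G ∧ ∃ j, A i j ∉ G} : Finset α),
      1 < #{p ∈ F | p.1 = i} := fun i hi => by
    obtain ⟨hsum, j, hj⟩ := (mem_filter.1 hi).2
    obtain ⟨j', hj', hj'G⟩ := exists_ne_notMem_of_sum_mem G hsum hj
    exact one_lt_card.2
      ⟨(i, j), by simp [F, hj], (i, j'), by simp [F, hj'G], by simp [hj'.symm]⟩
  have hVc : ∀ j ∈ ({j | ∑ i, A i j ∈ G ∧ ∃ i, A i j ∉ G} : Finset β),
      1 < #{p ∈ F | p.2 = j} := fun j hj => by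
    obtain ⟨hsum, i, hi⟩ := (mem_filter.1 hj).2
    obtain ⟨i', hi', hi'G⟩ := exists_ne_notMem_of_sum_mem G hsum hi
    exact one_lt_card.2
      ⟨(i, j), by simp [F, hi], (i', j), by simp [F, hi'G], by simp [hi'.symm]⟩
  obtain ⟨i₀, j₀, h₀⟩ := hA
  obtain ⟨D, hD0, hDF, hDr, hDc⟩ :=
    exists_ne_zero_supported_sums_eq_zero_of_one_lt_card (K := K) F
      ⟨(i₀, j₀), by simpa [F] using h₀⟩ _ _ hVr hVc
  have hDF' : ∀ i j, D i j ≠ 0 → A i j ∉ G := fun i j h => by simpa [F] using hDF i j h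
  refine ⟨D, hD0, hDF', fun i hi hAi => hi ?_, fun j hj hAj => hj ?_⟩
  · by_cases hiF : ∃ j, A i j ∉ G
    · exact hDr i (by simp [hAi, hiF])
    · push Not at hiF
      exact sum_eq_zero fun j _ => by_contra fun h => hDF' i j h (hiF j)
  · by_cases hjF : ∃ i, A i j ∉ G
    · exact hDc j (by simp [hAj, hjF])
    · push Not at hjF
      exact sum_eq_zero fun i _ => by_contra fun h => hDF' i j h (hjF i)

end Matrix

instance Matrix.locallyConvexSpace {𝕜 E α β : Type*} [Semiring 𝕜] [PartialOrder 𝕜]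
    [AddCommMonoid E] [Module 𝕜 E] [TopologicalSpace E] [LocallyConvexSpace 𝕜 E] :
    LocallyConvexSpace 𝕜 (Matrix α β E) :=
  Pi.locallyConvexSpace

theorem Matrix.finite_setOf_forall_eq_zero_or_eq_one {α β : Type*} [Finite α] [Finite β] :
    {A : Matrix α β ℝ | ∀ i j, A i j = 0 ∨ A i j = 1}.Finite :=
  (Set.Finite.pi fun _ => Set.Finite.pi fun _ => Set.toFinite {0, 1}).subset
    fun _ hA => Set.mem_univ_pi.2 fun i => Set.mem_univ_pi.2 fun j => hA i j

theorem eq_zero_of_mem_extremePoints_of_eventually_add_smul_mem {E : Type*} [AddCommGroup E]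
    [Module ℝ E] {s : Set E} {x y : E} (hx : x ∈ s.extremePoints ℝ)
    (h : ∀ᶠ t : ℝ in 𝓝 0, x + t • y ∈ s) : y = 0 := by
  have hneg : ∀ᶠ t : ℝ in 𝓝 0, x + (-t) • y ∈ s :=
    (continuous_neg.tendsto' (0 : ℝ) 0 neg_zero).eventually h
  obtain ⟨ε, ⟨hadd, hsub⟩, hε⟩ := (((h.and hneg).filter_mono nhdsWithin_le_nhds).and
    (self_mem_nhdsWithin (s := Set.Ioi 0))).exists
  have hmid : x ∈ openSegment ℝ (x + ε • y) (x + (-ε) • y) :=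
    ⟨1 / 2, 1 / 2, by norm_num, by norm_num, by norm_num, by module⟩
  simpa [hε.ne'] using hx.2 hadd hsub hmid

theorem eventually_add_mul_mem_Icc {a d lo hi : ℝ} (ha : a ∈ Set.Icc lo hi)
    (hd : d ≠ 0 → a ∈ Set.Ioo lo hi) : ∀ᶠ t in 𝓝 0, a + t * d ∈ Set.Icc lo hi := by
  obtain rfl | hd0 := eq_or_ne d 0
  · simpa using ha
  · have hcont : ContinuousAt (fun t : ℝ => a + t * d) 0 := by fun_prop
    filter_upwards [hcont.eventually_mem (by simpa using Ioo_mem_nhds (hd hd0).1 (hd hd0).2)]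
      with t ht
    exact Set.Ioo_subset_Icc_self ht

section
variable {n m : ℕ} {r R : Fin n → ℕ} {c C : Fin m → ℕ}

theorem convex_transportU : Convex ℝ (transportU n m r R c C) := by
  intro x hx y hy a b ha hb hab
  refine ⟨fun i j => ?_, fun i => ?_, fun j => ?_⟩
  · simpa using convex_Icc (0 : ℝ) 1 (hx.1 i j) (hy.1 i j) ha hb hab
  · simpa [sum_add_distrib, ← mul_sum] using
      convex_Icc (r i : ℝ) (R i) (hx.2.1 i) (hy.2.1 i) ha hb hab
  · simpa [sum_add_distrib, ← mul_sum] using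
      convex_Icc (c j : ℝ) (C j) (hx.2.2 j) (hy.2.2 j) ha hb hab

theorem isCompact_transportU : IsCompact (transportU n m r R c C) := by
  have hcube : IsCompact (Set.univ.pi fun _ : Fin n => Set.univ.pi fun _ : Fin m =>
      Set.Icc (0 : ℝ) 1) :=
    isCompact_univ_pi fun _ => isCompact_univ_pi fun _ => isCompact_Icc
  refine hcube.of_isClosed_subset ?_
    fun A hA => Set.mem_univ_pi.2 fun i => Set.mem_univ_pi.2 fun j => hA.1 i j
  have hIcc : ∀ {f : Matrix (Fin n) (Fin m) ℝ → ℝ} (lo hi : ℝ), Continuous f →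
      IsClosed ({A | lo ≤ f A} ∩ {A | f A ≤ hi}) := fun lo hi hf =>
    (isClosed_le continuous_const hf).inter (isClosed_le hf continuous_const)
  simp only [transportU, Set.ofPred_and, Set.ofPred_forall]
  refine .inter ?_ (.inter ?_ ?_)
  · exact isClosed_iInter fun i => isClosed_iInter fun j =>
      hIcc _ _ (continuous_id.matrix_elem i j)
  · exact isClosed_iInter fun i =>
      hIcc _ _ (continuous_finsetSum _ fun j _ => continuous_id.matrix_elem i j)
  · exact isClosed_iInter fun j =>
      hIcc _ _ (continuous_finsetSum _ fun i _ => continuous_id.matrix_elem i j)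

theorem eventually_add_smul_mem_transportU {A D : Matrix (Fin n) (Fin m) ℝ}
    (hA : A ∈ transportU n m r R c C)
    (hentry : ∀ i j, D i j ≠ 0 → A i j ∈ Set.Ioo 0 1)
    (hrow : ∀ i, ∑ j, D i j ≠ 0 → ∑ j, A i j ∈ Set.Ioo (r i : ℝ) (R i))
    (hcol : ∀ j, ∑ i, D i j ≠ 0 → ∑ i, A i j ∈ Set.Ioo (c j : ℝ) (C j)) :
    ∀ᶠ t in 𝓝 (0 : ℝ), A + t • D ∈ transportU n m r R c C := by
  filter_upwards [eventually_all.2 fun i => eventually_all.2 fun j =>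
      eventually_add_mul_mem_Icc (hA.1 i j) (hentry i j),
    eventually_all.2 fun i => eventually_add_mul_mem_Icc (hA.2.1 i) (hrow i),
    eventually_all.2 fun j => eventually_add_mul_mem_Icc (hA.2.2 j) (hcol j)] with t he hr hc
  refine ⟨fun i j => by simpa using he i j, fun i => ?_, fun j => ?_⟩
  · simpa [sum_add_distrib, ← mul_sum] using hr i
  · simpa [sum_add_distrib, ← mul_sum] using hc j

theorem extremePoints_transportU_subset :
    (transportU n m r R c C).extremePoints ℝ ⊆
      {A ∈ transportU n m r R c C | ∀ i j, A i j = 0 ∨ A i j = 1} := by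
  intro A hA
  set G := (Int.castAddHom ℝ).range
  have hIoo : ∀ {x : ℝ} {lo hi : ℕ}, x ∈ Set.Icc (lo : ℝ) hi → x ∉ G →
      x ∈ Set.Ioo (lo : ℝ) hi := fun hx hxG =>
    ⟨hx.1.lt_of_ne fun h => hxG ⟨_, h⟩, hx.2.lt_of_ne fun h => hxG ⟨_, h.symm⟩⟩
  have hint : ∀ i j, A i j ∈ G := by
    by_contra! h
    obtain ⟨D, hD0, hDe, hDr, hDc⟩ := Matrix.exists_ne_zero_moving_only_notMem G A h
    refine hD0 (eq_zero_of_mem_extremePoints_of_eventually_add_smul_mem hA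
      (eventually_add_smul_mem_transportU hA.1 (fun i j hij => ?_)
        (fun i hi => hIoo (hA.1.2.1 i) (hDr i hi)) fun j hj => hIoo (hA.1.2.2 j) (hDc j hj)))
    simpa using hIoo (lo := 0) (hi := 1) (by simpa using hA.1.1 i j) (hDe i j hij)
  refine ⟨hA.1, fun i j => ?_⟩
  obtain ⟨z, hz : (z : ℝ) = A i j⟩ := hint i j
  have h01 : 0 ≤ z ∧ z ≤ 1 := by exact_mod_cast hz ▸ hA.1.1 i j
  obtain rfl | rfl : z = 0 ∨ z = 1 := by omega
  all_goals simp [← hz]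

end

theorem transportU_eq_convexHull_general (n m : ℕ) (r R : Fin n → ℕ) (c C : Fin m → ℕ) :
    transportU n m r R c C =
      convexHull ℝ {A ∈ transportU n m r R c C | ∀ i j, A i j = 0 ∨ A i j = 1} := by
  set P := {A ∈ transportU n m r R c C | ∀ i j, A i j = 0 ∨ A i j = 1}
  have hP : P.Finite := Matrix.finite_setOf_forall_eq_zero_or_eq_one.subset fun _ hA => hA.2
  refine subset_antisymm ?_ (convexHull_min (fun _ hA => hA.1) convex_transportU)
  calc transportU n m r R c C
      = closure (convexHull ℝ ((transportU n m r R c C).extremePoints ℝ)) :=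
        (closure_convexHull_extremePoints isCompact_transportU convex_transportU).symm
    _ ⊆ closure (convexHull ℝ P) :=
        closure_mono (convexHull_mono extremePoints_transportU_subset)
    _ = convexHull ℝ P := (hP.isClosed_convexHull ℝ).closure_eq

theorem transportU_eq_convexHull (n m : ℕ) (hn : 0 < n) (hm : 0 < m)
    (r R : Fin n → ℕ) (c C : Fin m → ℕ)
    (hrR : ∀ i, r i ≤ R i) (hcC : ∀ j, c j ≤ C j) :
    transportU n m r R c C =
      convexHull ℝ {A ∈ transportU n m r R c C | ∀ i j, A i j = 0 ∨ A i j = 1} :=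
  transportU_eq_convexHull_general n m r R c C
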